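/- Every vertex of SP_9 is adjacent by a positive edge to at least one vertex of the set {1, 2, 3, 6}, and every vertex of SP_9 other than vertex 0 is adjacent by a negative edge to at least one vertex of {1, 2, 3, 6}. -/

import Mathlib

/-!
Under `vnum`, the labels `1, 2, 3, 6` are exactly the vertices `(0, c)` and `(c, 0)` with `c ≠ 0`:
the row and the column through vertex `0 = (0, 0)`, with `0` removed. A vertex `(a, b)` with
`a, b ≠ 0` is positively joined to `(a, 0)`; a vertex on the row or column through `0` is
positively joined to another vertex of that line, and since `Fin 3` has three elements such a
vertex avoiding `0` always exists. Negatively joined means differing in both coordinates: for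
`a ≠ 0` take `(0, c)` with `c ∉ {0, b}`, and for `a = 0`, `b ≠ 0` take `(1, 0)`.
-/

/-- Vertices of `SP_9`, identified with `{0,1,2} × {0,1,2}`. -/
abbrev V9 : Type := Fin 3 × Fin 3

/-- The edge `uv` of `SP_9` is positive: `u ≠ v` and they agree in exactly one coordinate. -/
abbrev pos9 (u v : V9) : Prop :=
  (u.1 = v.1 ∧ u.2 ≠ v.2) ∨ (u.1 ≠ v.1 ∧ u.2 = v.2)

/-- The edge `uv` of `SP_9` is negative: `u ≠ v` and it is not positive. -/
abbrev neg9 (u v : V9) : Prop := u ≠ v ∧ ¬ pos9 u v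

/-- The identification of the labels `{0,…,8}` with `{0,1,2} × {0,1,2}`,
`i ↦ (i div 3, i mod 3)`. -/
def vnum (n : Fin 9) : V9 := (⟨n.val / 3, by omega⟩, ⟨n.val % 3, by omega⟩)

def puncturedCross : Finset V9 := {w | (w.1 = 0 ∨ w.2 = 0) ∧ w ≠ (0, 0)}

lemma image_vnum_eq_puncturedCross :
    ({1, 2, 3, 6} : Finset (Fin 9)).image vnum = puncturedCross := by
  decide

lemma exists_mem_of_exists_mem_puncturedCross {P : V9 → Prop}
    (h : ∃ w ∈ puncturedCross, P w) : ∃ u ∈ ({1, 2, 3, 6} : Finset (Fin 9)), P (vnum u) := by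
  obtain ⟨w, hw, hP⟩ := h
  rw [← image_vnum_eq_puncturedCross, Finset.mem_image] at hw
  obtain ⟨u, hu, rfl⟩ := hw
  exact ⟨u, hu, hP⟩

lemma Fin.exists_ne_zero_ne (b : Fin 3) : ∃ c : Fin 3, c ≠ 0 ∧ c ≠ b := by
  revert b
  decide

lemma neg9_iff {u v : V9} : neg9 u v ↔ u.1 ≠ v.1 ∧ u.2 ≠ v.2 := by
  obtain ⟨a, b⟩ := u
  obtain ⟨c, d⟩ := v
  simp only [neg9, pos9, ne_eq, Prod.mk.injEq]
  tauto

lemma exists_pos9_mem_puncturedCross (v : V9) : ∃ w ∈ puncturedCross, pos9 v w := by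
  obtain ⟨a, b⟩ := v
  by_cases ha : a = 0
  · obtain ⟨c, hc0, hcb⟩ := Fin.exists_ne_zero_ne b
    exact ⟨(0, c), by simp [puncturedCross, hc0], Or.inl ⟨ha, hcb.symm⟩⟩
  by_cases hb : b = 0
  · obtain ⟨c, hc0, hca⟩ := Fin.exists_ne_zero_ne a
    exact ⟨(c, 0), by simp [puncturedCross, hc0], Or.inr ⟨hca.symm, hb⟩⟩
  exact ⟨(a, 0), by simp [puncturedCross, ha], Or.inl ⟨rfl, hb⟩⟩

lemma exists_neg9_mem_puncturedCross {v : V9} (hv : v ≠ (0, 0)) :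
    ∃ w ∈ puncturedCross, neg9 v w := by
  obtain ⟨a, b⟩ := v
  simp_rw [neg9_iff]
  by_cases ha : a = 0
  · subst ha
    have hb : b ≠ 0 := by rintro rfl; exact hv rfl
    exact ⟨(1, 0), by simp [puncturedCross], by decide, hb⟩
  obtain ⟨c, hc0, hcb⟩ := Fin.exists_ne_zero_ne b
  exact ⟨(0, c), by simp [puncturedCross, hc0], ha, hcb.symm⟩

/-- Every vertex of `SP_9` is positively adjacent to some vertex of
`{1, 2, 3, 6}`, and every vertex other than `0` is negatively adjacent to
some vertex of `{1, 2, 3, 6}`. -/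
theorem sp9_dominating_1236 :
    ∀ v : V9,
      (∃ u ∈ ({1, 2, 3, 6} : Finset (Fin 9)), pos9 v (vnum u)) ∧
      (v ≠ vnum 0 → ∃ u ∈ ({1, 2, 3, 6} : Finset (Fin 9)), neg9 v (vnum u)) :=
  fun v => ⟨exists_mem_of_exists_mem_puncturedCross (exists_pos9_mem_puncturedCross v),
    fun hv => exists_mem_of_exists_mem_puncturedCross (exists_neg9_mem_puncturedCross hv)⟩
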